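/- arXiv:2204.01557 — 2 statements merged into one kernel-verified Lean document; each statement's English description precedes it below -/
import Mathlib

section
/- Let F be a free filter on ω and (μ_n) a sequence of finitely supported signed measures on N_F. For each n let P_n = {x ∈ supp(μ_n) : μ_n({x}) > 0} and N_n = supp(μ_n) \ P_n. Then (μ_n) is a JN-sequence on N_F if and only if the following four conditions hold simultaneously: (1) ‖μ_n‖ = 1 for every n; (2) lim_{n→∞} ‖μ_n ↾ P_n‖ = lim_{n→∞} ‖μ_n ↾ N_n‖ = 1/2; (3) lim_{n→∞} ‖μ_n ↾ (ω \ A)‖ = 0 for every A ∈ F; (4) for every A ∈ F the set (⋃_{n∈ω} supp(μ_n)) \ A is finite. -/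
open Filter Topology

noncomputable section

/-- The topology of the space `N_F = ω ∪ {p_F}` on `Option α`, where `none` plays the
role of the point `p_F`: every `some a` is isolated, and neighborhoods of `none`
are the sets `A ∪ {p_F}` with `A ∈ F`. -/
def NFtop {α : Type*} (F : Filter α) : TopologicalSpace (Option α) where
  IsOpen U := none ∈ U → {a : α | some a ∈ U} ∈ F
  isOpen_univ := fun _ => Filter.univ_mem
  isOpen_inter := fun U V hU hV h => F.inter_sets (hU h.1) (hV h.2)
  isOpen_sUnion := fun S hS h => by
    obtain ⟨U, hU, hnU⟩ := h
    exact Filter.mem_of_superset (hS U hU hnU) fun a ha => ⟨U, hU, ha⟩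

/-- The norm `‖μ‖ = Σ |α_i|` of a finitely supported signed measure. -/
def mnorm {X : Type*} (μ : X →₀ ℝ) : ℝ := ∑ x ∈ μ.support, |μ x|

/-- The integral `μ(f) = Σ α_i f(x_i)`. -/
def mIntg {X : Type*} (μ : X →₀ ℝ) (f : X → ℝ) : ℝ := ∑ x ∈ μ.support, μ x * f x

/-- The norm of the restriction `μ ↾ A`. -/
def mnormOn {X : Type*} (μ : X →₀ ℝ) (A : Set X) : ℝ :=
  ∑ x ∈ μ.support, Set.indicator A (fun y => |μ y|) x

/-- The value `μ(A)` of a finitely supported signed measure on a set. -/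
def msetOf {X : Type*} (μ : X →₀ ℝ) (A : Set X) : ℝ :=
  ∑ x ∈ μ.support, Set.indicator A (fun y => μ y) x

/-- A JN-sequence on `X` (with topology `t`). -/
def IsJNSeq {X : Type*} (t : TopologicalSpace X) (μ : ℕ → (X →₀ ℝ)) : Prop :=
  (∀ n, mnorm (μ n) = 1) ∧
  ∀ f : X → ℝ, @Continuous X ℝ t _ f →
    Tendsto (fun n => mIntg (μ n) f) atTop (nhds 0)

/-- A BJN-sequence on `X` (with topology `t`). -/
def IsBJNSeq {X : Type*} (t : TopologicalSpace X) (μ : ℕ → (X →₀ ℝ)) : Prop :=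
  (∀ n, mnorm (μ n) = 1) ∧
  ∀ f : X → ℝ, @Continuous X ℝ t _ f → (∃ C : ℝ, ∀ x, |f x| ≤ C) →
    Tendsto (fun n => mIntg (μ n) f) atTop (nhds 0)

/-- The Josefson–Nissenzweig property. -/
def JNP {X : Type*} (t : TopologicalSpace X) : Prop := ∃ μ, IsJNSeq t μ

/-- The bounded Josefson–Nissenzweig property. -/
def BJNP {X : Type*} (t : TopologicalSpace X) : Prop := ∃ μ, IsBJNSeq t μ

/-- A free filter: a proper filter containing all cofinite sets. -/
def IsFreeFilter {α : Type*} (F : Filter α) : Prop := F.NeBot ∧ F ≤ Filter.cofinite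

/-- Katětov preorder: `F ≤_K G`. -/
def KatetovLE (F G : Filter ℕ) : Prop := ∃ f : ℕ → ℕ, ∀ A ∈ F, f ⁻¹' A ∈ G

lemma cont_iff {F : Filter ℕ} (f : Option ℕ → ℝ) :
    @Continuous _ _ (NFtop F) _ f ↔ Tendsto (fun a => f (some a)) F (nhds (f none)) := by
  constructor
  · intro hf V hV
    obtain ⟨W, hWV, hW, hfW⟩ := mem_nhds_iff.mp hV
    have h1 : @IsOpen _ (NFtop F) (f ⁻¹' W) := @Continuous.isOpen_preimage _ _ (NFtop F) _ f hf W hW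
    have h2 : {a : ℕ | some a ∈ f ⁻¹' W} ∈ F := h1 hfW
    exact mem_of_superset h2 fun a ha => hWV ha
  · intro h
    rw [@continuous_def _ _ (NFtop F) _]
    intro V hV hnone
    exact h (hV.mem_nhds hnone)

lemma abs_le_mnorm {X : Type*} (μ : X →₀ ℝ) (x : X) : |μ x| ≤ mnorm μ := by
  by_cases hx : x ∈ μ.support
  · exact Finset.single_le_sum (f := fun y => |μ y|) (fun y _ => abs_nonneg _) hx
  · simp only [Finsupp.notMem_support_iff] at hx
    simp [hx, mnorm]
    exact Finset.sum_nonneg fun y _ => abs_nonneg _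

lemma mnormOn_nonneg {X : Type*} (μ : X →₀ ℝ) (A : Set X) : 0 ≤ mnormOn μ A :=
  Finset.sum_nonneg fun y _ => Set.indicator_nonneg (fun _ _ => abs_nonneg _) _

lemma mnormOn_le_mnorm {X : Type*} (μ : X →₀ ℝ) (A : Set X) : mnormOn μ A ≤ mnorm μ :=
  Finset.sum_le_sum fun x _ => Set.indicator_le_self' (fun _ _ => abs_nonneg _) x

lemma split_PN {X : Type*} (μ : X →₀ ℝ) :
    mnormOn μ {x | 0 < μ x} + mnormOn μ {x | μ x < 0} = mnorm μ := by
  rw [mnormOn, mnormOn, mnorm, ← Finset.sum_add_distrib]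
  refine Finset.sum_congr rfl fun x hx => ?_
  have hx0 : μ x ≠ 0 := Finsupp.mem_support_iff.mp hx
  rcases hx0.lt_or_gt with h | h
  · simp [Set.indicator_apply, Set.mem_setOf_eq, h, not_lt_of_gt h]
  · simp [Set.indicator_apply, Set.mem_setOf_eq, h, not_lt_of_gt h]

lemma intg_one {X : Type*} (μ : X →₀ ℝ) :
    mIntg μ (fun _ => 1) = mnormOn μ {x | 0 < μ x} - mnormOn μ {x | μ x < 0} := by
  rw [mnormOn, mnormOn, mIntg, ← Finset.sum_sub_distrib]
  refine Finset.sum_congr rfl fun x hx => ?_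
  have hx0 : μ x ≠ 0 := Finsupp.mem_support_iff.mp hx
  rcases hx0.lt_or_gt with h | h
  · simp [Set.indicator_apply, Set.mem_setOf_eq, h, not_lt_of_gt h, abs_of_neg h]
  · simp [Set.indicator_apply, Set.mem_setOf_eq, h, not_lt_of_gt h, abs_of_pos h]

lemma cont_single {F : Filter ℕ} (hFc : F ≤ Filter.cofinite) (a0 : ℕ) :
    @Continuous _ _ (NFtop F) _ (fun x => if x = some a0 then (1:ℝ) else 0) := by
  rw [cont_iff]
  have hmem : {a : ℕ | a ≠ a0} ∈ F := by
    apply hFc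
    rw [Filter.mem_cofinite]
    simp [Set.compl_setOf]
  have heq : (fun a : ℕ => if some a = some a0 then (1:ℝ) else 0) =ᶠ[F] fun _ => 0 := by
    filter_upwards [hmem] with a ha
    simp [ha]
  simp only [show ((if (none : Option ℕ) = some a0 then (1:ℝ) else 0)) = 0 by simp]
  exact Tendsto.congr' heq.symm tendsto_const_nhds

lemma intg_single {X : Type*} (μ : X →₀ ℝ) (x0 : X) [DecidableEq X] :
    mIntg μ (fun y => if y = x0 then (1:ℝ) else 0) = μ x0 := by
  rw [mIntg]
  have : ∀ x ∈ μ.support, μ x * (if x = x0 then (1:ℝ) else 0)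
      = if x = x0 then μ x else 0 := by
    intro x _; split <;> ring
  rw [Finset.sum_congr rfl this, Finset.sum_ite_eq' μ.support x0 (fun x => μ x)]
  split
  · rfl
  · next h => exact (Finsupp.notMem_support_iff.mp h).symm

lemma fwd2 (μ : ℕ → (Option ℕ →₀ ℝ)) (h1 : ∀ n, mnorm (μ n) = 1)
    (h0 : Tendsto (fun n => mIntg (μ n) (fun _ => 1)) atTop (nhds 0)) :
    Tendsto (fun n => mnormOn (μ n) {x | 0 < μ n x}) atTop (nhds (1/2)) ∧
    Tendsto (fun n => mnormOn (μ n) {x | μ n x < 0}) atTop (nhds (1/2)) := by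
  constructor
  · have key : ∀ n, mnormOn (μ n) {x | 0 < μ n x}
        = (1 + mIntg (μ n) (fun _ => 1)) / 2 := by
      intro n
      have hs := split_PN (μ n)
      have hi := intg_one (μ n)
      rw [h1 n] at hs
      linarith
    simp only [key]
    have := ((tendsto_const_nhds (x := (1:ℝ)) (f := atTop)).add h0).div_const 2
    simpa using this
  · have key : ∀ n, mnormOn (μ n) {x | μ n x < 0}
        = (1 - mIntg (μ n) (fun _ => 1)) / 2 := by
      intro n
      have hs := split_PN (μ n)
      have hi := intg_one (μ n)
      rw [h1 n] at hs
      linarith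
    simp only [key]
    have := ((tendsto_const_nhds (x := (1:ℝ)) (f := atTop)).sub h0).div_const 2
    simpa using this

lemma fwd4 {F : Filter ℕ} (μ : ℕ → (Option ℕ →₀ ℝ))
    (h1 : ∀ n, mnorm (μ n) = 1)
    (hJ : ∀ f : Option ℕ → ℝ, @Continuous _ _ (NFtop F) _ f →
      Tendsto (fun n => mIntg (μ n) f) atTop (nhds 0))
    (A : Set ℕ) (hA : A ∈ F) :
    ((⋃ n, ((μ n).support : Set (Option ℕ))) \ (Option.some '' A)).Finite := by
  classical
  by_contra hinf
  set S : Set (Option ℕ) :=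
    (((⋃ n, ((μ n).support : Set (Option ℕ))) \ (Option.some '' A)) \ {none}) with hSdef
  have hSinf : S.Infinite :=
    Set.Infinite.diff hinf (Set.finite_singleton none)
  -- the choice step
  have step : ∀ N : ℕ, ∃ x : Option ℕ, ∃ n : ℕ, N < n ∧ x ∈ (μ n).support ∧ x ∈ S ∧
      ∀ m ≤ N, x ∉ (μ m).support := by
    intro N
    have hT : (⋃ m ∈ Finset.range (N+1), ((μ m).support : Set (Option ℕ))).Finite :=
      Set.Finite.biUnion (Finset.range (N+1)).finite_toSet
        (fun m _ => ((μ m).support : Set (Option ℕ)).toFinite)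
    obtain ⟨x, hxS, hxT⟩ := (hSinf.diff hT).nonempty
    have hxU : x ∈ ⋃ n, ((μ n).support : Set (Option ℕ)) := hxS.1.1
    obtain ⟨n, hn⟩ := Set.mem_iUnion.mp hxU
    have hnot : ∀ m ≤ N, x ∉ (μ m).support := by
      intro m hm hxm
      exact hxT (Set.mem_biUnion (Finset.mem_range.mpr (Nat.lt_succ_of_le hm)) hxm)
    refine ⟨x, n, ?_, hn, hxS, hnot⟩
    by_contra hle
    exact hnot n (Nat.le_of_not_lt hle) hn
  choose xf nf hlt hsupp hS hnotin using step
  -- recursively define thresholds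
  let ν : ℕ → ℕ := fun k => Nat.rec 0 (fun _ prev => nf prev) k
  have hνs : ∀ k, ν (k+1) = nf (ν k) := fun _ => rfl
  have hνmono : StrictMono ν := strictMono_nat_of_lt_succ fun k => by
    rw [hνs]; exact hlt (ν k)
  set x : ℕ → Option ℕ := fun k => xf (ν k) with hxdef
  set n : ℕ → ℕ := fun k => nf (ν k) with hndef
  have hnν : ∀ k, n k = ν (k+1) := fun k => rfl
  have hnmono : StrictMono n := fun j k hjk => by
    rw [hnν, hnν]; exact hνmono (Nat.succ_lt_succ hjk)
  have hxsupp : ∀ k, x k ∈ (μ (n k)).support := fun k => hsupp (ν k)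
  have hxS : ∀ k, x k ∈ S := fun k => hS (ν k)
  have hxnot : ∀ j k, j < k → x k ∉ (μ (n j)).support := by
    intro j k hjk
    apply hnotin (ν k) (nf (ν j))
    rw [← hνs]
    exact hνmono.monotone (Nat.succ_le_of_lt hjk)
  have hinj : Function.Injective x := by
    intro j k hjk
    by_contra hne
    rcases Nat.lt_or_ge j k with h | h
    · exact hxnot j k h (hjk ▸ hxsupp j)
    · have h' : k < j := lt_of_le_of_ne h (Ne.symm hne)
      exact hxnot k j h' (hjk ▸ hxsupp k)
  -- the coefficients
  set d : ℕ → ℝ := fun k => |(μ (n k)) (x k)| with hddef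
  have hdpos : ∀ k, 0 < d k := fun k =>
    abs_pos.mpr (Finsupp.mem_support_iff.mp (hxsupp k))
  let u : ℕ → ℝ := fun k => Nat.rec 1 (fun j prev => prev + prev / d j) k
  have hu0 : u 0 = 1 := rfl
  have hus : ∀ k, u (k+1) = u k + u k / d k := fun _ => rfl
  set c : ℕ → ℝ := fun k => u k / d k with hcdef
  have hupos : ∀ k, 0 < u k := by
    intro k
    induction k with
    | zero => norm_num [hu0]
    | succ j ih =>
      rw [hus]
      have := div_pos ih (hdpos j)
      linarith
  have hcpos : ∀ k, 0 < c k := fun k => div_pos (hupos k) (hdpos k)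
  have husum : ∀ k, u k = 1 + ∑ j ∈ Finset.range k, c j := by
    intro k
    induction k with
    | zero => simp [hu0]
    | succ j ih =>
      rw [hus, Finset.sum_range_succ]
      simp only [hcdef]
      rw [ih]
      ring
  -- the test function
  set f : Option ℕ → ℝ := fun y => if h : ∃ k, x k = y then c h.choose else 0 with hfdef
  have hfx : ∀ k, f (x k) = c k := by
    intro k
    have h : ∃ j, x j = x k := ⟨k, rfl⟩
    have : f (x k) = c h.choose := dif_pos h
    rwa [hinj h.choose_spec] at this
  have hf0 : ∀ y, (¬ ∃ k, x k = y) → f y = 0 := fun y h => dif_neg h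
  have hxne : ∀ k, x k ≠ none := by
    intro k h
    exact (hxS k).2 (by rw [← h] at *; exact h ▸ rfl)
  have hfnone : f none = 0 := by
    apply hf0
    rintro ⟨k, hk⟩
    exact hxne k hk
  have hcont : @Continuous _ _ (NFtop F) _ f := by
    rw [cont_iff, hfnone]
    have heq : (fun a : ℕ => f (some a)) =ᶠ[F] fun _ => 0 := by
      filter_upwards [hA] with a ha
      apply hf0
      rintro ⟨k, hk⟩
      exact (hxS k).1.2 ⟨a, ha, hk.symm⟩
    exact Tendsto.congr' heq.symm tendsto_const_nhds
  -- lower bound on the integrals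
  have hbig : ∀ k, 1 ≤ |mIntg (μ (n k)) f| := by
    intro k
    set m := μ (n k) with hmdef
    have hxk : x k ∈ m.support := hxsupp k
    have hsplit : mIntg m f
        = m (x k) * f (x k) + ∑ y ∈ m.support.erase (x k), m y * f y := by
      rw [mIntg, ← Finset.add_sum_erase _ _ hxk]
    set T : Finset (Option ℕ) := (Finset.range k).image x with hTdef
    have hvanish : ∀ y ∈ m.support.erase (x k), y ∉ m.support.erase (x k) ∩ T →
        |m y * f y| = 0 := by
      intro y hy hyT
      have hyT' : y ∉ T := fun h => hyT (Finset.mem_inter.mpr ⟨hy, h⟩)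
      have : f y = 0 := by
        apply hf0
        rintro ⟨j, hj⟩
        rcases lt_trichotomy j k with h | h | h
        · exact hyT' (hTdef ▸ Finset.mem_image.mpr ⟨j, Finset.mem_range.mpr h, hj⟩)
        · exact (Finset.mem_erase.mp hy).1 (h ▸ hj.symm ▸ rfl)
        · exact hxnot k j h (hj ▸ (Finset.mem_erase.mp hy).2)
      rw [this, mul_zero, abs_zero]
    have hRbound : |∑ y ∈ m.support.erase (x k), m y * f y|
        ≤ ∑ j ∈ Finset.range k, c j := by
      calc |∑ y ∈ m.support.erase (x k), m y * f y|
          ≤ ∑ y ∈ m.support.erase (x k), |m y * f y| :=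
            Finset.abs_sum_le_sum_abs _ _
        _ = ∑ y ∈ m.support.erase (x k) ∩ T, |m y * f y| :=
            (Finset.sum_subset (Finset.inter_subset_left) hvanish).symm
        _ ≤ ∑ y ∈ T, |m y * f y| :=
            Finset.sum_le_sum_of_subset_of_nonneg (Finset.inter_subset_right)
              (fun y _ _ => abs_nonneg _)
        _ = ∑ j ∈ Finset.range k, |m (x j) * f (x j)| :=
            Finset.sum_image fun a _ b _ h => hinj h
        _ ≤ ∑ j ∈ Finset.range k, c j := by
            apply Finset.sum_le_sum
            intro j _
            rw [hfx j, abs_mul, abs_of_pos (hcpos j)]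
            calc |m (x j)| * c j ≤ 1 * c j := by
                  apply mul_le_mul_of_nonneg_right _ (hcpos j).le
                  rw [← h1 (n k)]
                  exact abs_le_mnorm m (x j)
              _ = c j := one_mul _
    have hmain : d k * c k = u k := by
      rw [hcdef]
      field_simp [(hdpos k).ne']
    have habs : |m (x k) * f (x k)| = u k := by
      rw [hfx k, abs_mul, abs_of_pos (hcpos k), ← hmain, hddef]
    calc (1:ℝ) = u k - ∑ j ∈ Finset.range k, c j := by rw [husum k]; ring
      _ ≤ |m (x k) * f (x k)| - |∑ y ∈ m.support.erase (x k), m y * f y| := by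
          rw [habs]; linarith [hRbound]
      _ ≤ |m (x k) * f (x k) + ∑ y ∈ m.support.erase (x k), m y * f y| := by
          have := abs_add_le (m (x k) * f (x k) + ∑ y ∈ m.support.erase (x k), m y * f y)
            (-(∑ y ∈ m.support.erase (x k), m y * f y))
          simp only [add_neg_cancel_right, abs_neg] at this
          linarith
      _ = |mIntg m f| := by rw [hsplit]
  -- contradiction
  have htend : Tendsto (fun k => mIntg (μ (n k)) f) atTop (nhds 0) :=
    (hJ f hcont).comp hnmono.tendsto_atTop
  have : ∀ᶠ k in atTop, |mIntg (μ (n k)) f| < 1 := by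
    have := htend.abs
    simp only [abs_zero] at this
    exact this.eventually_lt_const one_pos
  obtain ⟨k, hk⟩ := this.exists
  exact absurd (hbig k) (not_le.mpr hk)

lemma fwd3 {F : Filter ℕ} (hFc : F ≤ Filter.cofinite) (μ : ℕ → (Option ℕ →₀ ℝ))
    (h1 : ∀ n, mnorm (μ n) = 1)
    (hJ : ∀ f : Option ℕ → ℝ, @Continuous _ _ (NFtop F) _ f →
      Tendsto (fun n => mIntg (μ n) f) atTop (nhds 0))
    (A : Set ℕ) (hA : A ∈ F) :
    Tendsto (fun n => mnormOn (μ n) (Option.some '' Aᶜ)) atTop (nhds 0) := by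
  classical
  have hfin := fwd4 μ h1 hJ A hA
  set D : Set (Option ℕ) := Option.some '' Aᶜ with hDdef
  set E' : Finset (Option ℕ) := hfin.toFinset.filter (fun y => y ∈ D) with hE'def
  have hDA : ∀ y ∈ D, y ∉ Option.some '' A := by
    rintro y ⟨a, ha, rfl⟩ ⟨b, hb, hba⟩
    exact ha (Option.some_injective ℕ hba ▸ hb)
  -- pointwise bound
  have hbound : ∀ n, mnormOn (μ n) D ≤ ∑ y ∈ E', |μ n y| := by
    intro n
    have hsub : (μ n).support ∩ E' ⊆ (μ n).support := Finset.inter_subset_left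
    have heq : ∑ y ∈ (μ n).support ∩ E', D.indicator (fun z => |μ n z|) y
        = mnormOn (μ n) D := by
      apply Finset.sum_subset hsub
      intro y hy hyE
      apply Set.indicator_of_notMem
      intro hyD
      apply hyE
      refine Finset.mem_inter.mpr ⟨hy, Finset.mem_filter.mpr ⟨?_, hyD⟩⟩
      rw [Set.Finite.mem_toFinset]
      exact ⟨Set.mem_iUnion.mpr ⟨n, hy⟩, hDA y hyD⟩
    rw [← heq]
    calc ∑ y ∈ (μ n).support ∩ E', D.indicator (fun z => |μ n z|) y
        ≤ ∑ y ∈ E', D.indicator (fun z => |μ n z|) y :=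
          Finset.sum_le_sum_of_subset_of_nonneg Finset.inter_subset_right
            (fun y _ _ => Set.indicator_nonneg (fun _ _ => abs_nonneg _) _)
      _ ≤ ∑ y ∈ E', |μ n y| :=
          Finset.sum_le_sum fun y _ => Set.indicator_le_self' (fun _ _ => abs_nonneg _) y
  -- each coordinate tends to zero
  have hcoord : ∀ y ∈ E', Tendsto (fun n => |μ n y|) atTop (nhds 0) := by
    intro y hy
    obtain ⟨a, _, rfl⟩ := (Finset.mem_filter.mp hy).2
    have := hJ _ (cont_single hFc a)
    simp only [intg_single] at this
    have habs := this.abs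
    simpa using habs
  have hsum : Tendsto (fun n => ∑ y ∈ E', |μ n y|) atTop (nhds 0) := by
    have := tendsto_finset_sum E' hcoord
    simpa using this
  exact squeeze_zero (fun n => mnormOn_nonneg _ _) hbound hsum

lemma intg_decomp {X : Type*} (μ : X →₀ ℝ) (f : X → ℝ) (c : ℝ) :
    mIntg μ f = mIntg μ (fun x => f x - c) + c * mIntg μ (fun _ => 1) := by
  rw [mIntg, mIntg, mIntg, Finset.mul_sum, ← Finset.sum_add_distrib]
  exact Finset.sum_congr rfl fun x _ => by ring

lemma bwd {F : Filter ℕ} (μ : ℕ → (Option ℕ →₀ ℝ))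
    (h1 : ∀ n, mnorm (μ n) = 1)
    (h2 : Tendsto (fun n => mnormOn (μ n) {x | 0 < μ n x}) atTop (nhds (1/2)) ∧
      Tendsto (fun n => mnormOn (μ n) {x | μ n x < 0}) atTop (nhds (1/2)))
    (h3 : ∀ A ∈ F,
      Tendsto (fun n => mnormOn (μ n) (Option.some '' Aᶜ)) atTop (nhds 0))
    (h4 : ∀ A ∈ F,
      ((⋃ n, ((μ n).support : Set (Option ℕ))) \ (Option.some '' A)).Finite)
    (f : Option ℕ → ℝ) (hf : @Continuous _ _ (NFtop F) _ f) :
    Tendsto (fun n => mIntg (μ n) f) atTop (nhds 0) := by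
  classical
  set c : ℝ := f none with hcdef
  have hsum0 : Tendsto (fun n => mIntg (μ n) (fun _ => 1)) atTop (nhds 0) := by
    have := h2.1.sub h2.2
    simp only [sub_self] at this
    have heq : (fun n => mnormOn (μ n) {x | 0 < μ n x} - mnormOn (μ n) {x | μ n x < 0})
        = fun n => mIntg (μ n) (fun _ => 1) := by
      funext n; rw [intg_one]
    rwa [heq] at this
  set g : Option ℕ → ℝ := fun x => f x - c with hgdef
  have hg : Tendsto (fun a => g (some a)) F (nhds 0) := by
    have := (cont_iff f).mp hf
    have h' := this.sub (tendsto_const_nhds (x := c))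
    simpa [hgdef, hcdef] using h'
  have hgnone : g none = 0 := by simp [hgdef, hcdef]
  -- main part: the integral of g tends to 0
  have hmain : Tendsto (fun n => mIntg (μ n) g) atTop (nhds 0) := by
    rw [NormedAddCommGroup.tendsto_nhds_zero]
    intro ε hε
    set A : Set ℕ := (fun a => g (some a)) ⁻¹' Metric.ball 0 (ε/2) with hAdef
    have hA : A ∈ F := hg (Metric.ball_mem_nhds 0 (by positivity))
    have hfin := h4 A hA
    set M : ℝ := (∑ y ∈ hfin.toFinset, |g y|) + 1 with hMdef
    have hMpos : 0 < M := by
      have : 0 ≤ ∑ y ∈ hfin.toFinset, |g y| :=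
        Finset.sum_nonneg fun y _ => abs_nonneg _
      rw [hMdef]; linarith
    have hMbound : ∀ y ∈ ((⋃ n, ((μ n).support : Set (Option ℕ))) \ (Option.some '' A)),
        |g y| ≤ M := by
      intro y hy
      have hy' : y ∈ hfin.toFinset := hfin.mem_toFinset.mpr hy
      have := Finset.single_le_sum (f := fun z => |g z|)
        (fun z _ => abs_nonneg _) hy'
      rw [hMdef]; linarith
    have hev : ∀ᶠ n in atTop, mnormOn (μ n) (Option.some '' Aᶜ) < ε/(2*M) :=
      (h3 A hA).eventually_lt_const (by positivity)
    filter_upwards [hev] with n hn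
    rw [Real.norm_eq_abs]
    -- pointwise bound on each term of the sum
    have hpt : ∀ y ∈ (μ n).support,
        |μ n y * g y| ≤ (ε/2) * |μ n y|
          + M * (Option.some '' Aᶜ).indicator (fun z => |μ n z|) y := by
      intro y hy
      have hind0 : 0 ≤ (Option.some '' Aᶜ).indicator (fun z => |μ n z|) y :=
        Set.indicator_nonneg (fun _ _ => abs_nonneg _) _
      match y with
      | none =>
        rw [hgnone, mul_zero, abs_zero]
        positivity
      | some a =>
        by_cases ha : a ∈ A
        · have : |g (some a)| < ε/2 := by
            have := ha
            rw [hAdef, Set.mem_preimage, Metric.mem_ball, Real.dist_eq, sub_zero] at this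
            exact this
          have h1' : |μ n (some a) * g (some a)| ≤ |μ n (some a)| * (ε/2) := by
            rw [abs_mul]
            exact mul_le_mul_of_nonneg_left this.le (abs_nonneg _)
          calc |μ n (some a) * g (some a)| ≤ |μ n (some a)| * (ε/2) := h1'
            _ = (ε/2) * |μ n (some a)| := by ring
            _ ≤ _ := le_add_of_nonneg_right (mul_nonneg hMpos.le hind0)
        · have hyE : some a ∈ ((⋃ m, ((μ m).support : Set (Option ℕ)))
              \ (Option.some '' A)) := by
            constructor
            · exact Set.mem_iUnion.mpr ⟨n, hy⟩
            · rintro ⟨b, hb, hba⟩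
              exact ha (Option.some_injective ℕ hba ▸ hb)
          have hgM : |g (some a)| ≤ M := hMbound _ hyE
          have hind : (Option.some '' Aᶜ).indicator (fun z => |μ n z|) (some a)
              = |μ n (some a)| := Set.indicator_of_mem (show some a ∈ Option.some '' Aᶜ from ⟨a, ha, rfl⟩) _
          calc |μ n (some a) * g (some a)| ≤ |μ n (some a)| * M := by
                rw [abs_mul]
                exact mul_le_mul_of_nonneg_left hgM (abs_nonneg _)
            _ = M * (Option.some '' Aᶜ).indicator (fun z => |μ n z|) (some a) := by
                rw [hind]; ring
            _ ≤ _ := by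
                have : 0 ≤ (ε/2) * |μ n (some a)| := by positivity
                linarith
    calc |mIntg (μ n) g| ≤ ∑ y ∈ (μ n).support, |μ n y * g y| :=
          Finset.abs_sum_le_sum_abs _ _
      _ ≤ ∑ y ∈ (μ n).support, ((ε/2) * |μ n y|
            + M * (Option.some '' Aᶜ).indicator (fun z => |μ n z|) y) :=
          Finset.sum_le_sum hpt
      _ = (ε/2) * mnorm (μ n) + M * mnormOn (μ n) (Option.some '' Aᶜ) := by
          rw [Finset.sum_add_distrib, ← Finset.mul_sum, ← Finset.mul_sum, mnorm, mnormOn]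
      _ < ε/2 + M * (ε/(2*M)) := by
          rw [h1 n, mul_one]
          have : M * mnormOn (μ n) (Option.some '' Aᶜ) < M * (ε/(2*M)) :=
            mul_lt_mul_of_pos_left hn hMpos
          linarith
      _ = ε := by field_simp; ring
  -- combine
  have hdecomp : (fun n => mIntg (μ n) f)
      = fun n => mIntg (μ n) g + c * mIntg (μ n) (fun _ => 1) := by
    funext n; exact intg_decomp (μ n) f c
  rw [hdecomp]
  have := hmain.add (hsum0.const_mul c)
  simpa using this

/-- Characterization of JN-sequences on `N_F`: `(μ_n)` is a JN-sequence iff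
(1) `‖μ_n‖ = 1`, (2) `‖μ_n ↾ P_n‖ → 1/2` and `‖μ_n ↾ N_n‖ → 1/2`,
(3) `‖μ_n ↾ (ω \ A)‖ → 0` for every `A ∈ F`, and
(4) `(⋃_n supp(μ_n)) \ A` is finite for every `A ∈ F`. -/
theorem stmt4 (F : Filter ℕ) (hF : IsFreeFilter F) (μ : ℕ → (Option ℕ →₀ ℝ)) :
    IsJNSeq (NFtop F) μ ↔
      ((∀ n, mnorm (μ n) = 1) ∧
       (Tendsto (fun n => mnormOn (μ n) {x | 0 < μ n x}) atTop (nhds (1/2)) ∧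
        Tendsto (fun n => mnormOn (μ n) {x | μ n x < 0}) atTop (nhds (1/2))) ∧
       (∀ A ∈ F,
        Tendsto (fun n => mnormOn (μ n) (Option.some '' Aᶜ)) atTop (nhds 0)) ∧
       (∀ A ∈ F,
        ((⋃ n, ((μ n).support : Set (Option ℕ))) \ (Option.some '' A)).Finite)) := by
  constructor
  · rintro ⟨h1, hJ⟩
    refine ⟨h1, ?_, ?_, ?_⟩
    · exact fwd2 μ h1 (hJ _ (@continuous_const _ _ (NFtop F) _ _))
    · exact fun A hA => fwd3 hF.2 μ h1 hJ A hA
    · exact fun A hA => fwd4 μ h1 hJ A hA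
  · rintro ⟨h1, h2, h3, h4⟩
    exact ⟨h1, fun f hf => bwd μ h1 h2 h3 h4 f hf⟩
end
end

section
/- Let F be a free filter on ω. The following are equivalent: (1) N_F has the bounded Josefson–Nissenzweig property; (2) there is a density submeasure φ on ω with ω ∉ Exh(φ) such that F ⊆ Exh(φ)*; (3) there is a non-pathological lower semicontinuous submeasure φ on ω with ω ∉ Exh(φ) such that F ⊆ Exh(φ)*. -/
open Filter Topology

noncomputable section

/-- A submeasure on `ω`: monotone, subadditive, vanishing on `∅`, finite on singletons. -/
structure Submeasure where
  m : Set ℕ → ENNReal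
  empty : m ∅ = 0
  lt_top_singleton : ∀ n : ℕ, m {n} < ⊤
  le_union : ∀ A B : Set ℕ, m A ≤ m (A ∪ B)
  union_le : ∀ A B : Set ℕ, m (A ∪ B) ≤ m A + m B

/-- Lower semicontinuity: `φ(A) = lim_n φ(A ∩ [0,n])`. -/
def Submeasure.LSC (φ : Submeasure) : Prop :=
  ∀ A : Set ℕ, Tendsto (fun n : ℕ => φ.m (A ∩ Set.Iic n)) atTop (nhds (φ.m A))

/-- Membership in the exhaustive ideal `Exh(φ)`: `lim_n φ(A \ [0,n]) = 0`. -/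
def Submeasure.ExhMem (φ : Submeasure) (A : Set ℕ) : Prop :=
  Tendsto (fun n : ℕ => φ.m (A \ Set.Iic n)) atTop (nhds 0)

/-- The value of a finitely supported nonnegative measure on `ω` on a set, in `ℝ≥0∞`. -/
def fmeasE (ν : ℕ →₀ NNReal) (A : Set ℕ) : ENNReal :=
  ∑ x ∈ ν.support, Set.indicator A (fun y => (ν y : ENNReal)) x

/-- A density submeasure: the pointwise supremum of a sequence of finitely supported
nonnegative measures on `ω` with pairwise disjoint supports. -/
def Submeasure.IsDensity (φ : Submeasure) : Prop :=
  ∃ ν : ℕ → (ℕ →₀ NNReal),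
    (∀ i j, i ≠ j → Disjoint (ν i).support (ν j).support) ∧
    ∀ A : Set ℕ, φ.m A = ⨆ n, fmeasE (ν n) A

/-- The (σ-additive, nonnegative) measure on `P(ω)` with point masses `g`. -/
def measOfWeights (g : ℕ → ENNReal) (A : Set ℕ) : ENNReal := ∑' n : ℕ, Set.indicator A g n

/-- Non-pathological submeasure: `φ(A)` is a supremum of values of dominated measures. -/
def Submeasure.NonPathological (φ : Submeasure) : Prop :=
  ∀ A : Set ℕ,
    φ.m A = ⨆ (g : ℕ → ENNReal) (_ : ∀ B : Set ℕ, measOfWeights g B ≤ φ.m B),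
      measOfWeights g A
section Aux

open Set

lemma continuous_NFtop {F : Filter ℕ} {f : Option ℕ → ℝ}
    (h : {a : ℕ | f (some a) = f none} ∈ F) : @Continuous _ _ (NFtop F) _ f := by
  rw [@continuous_def _ _ (NFtop F) _]
  intro U hU
  show none ∈ f ⁻¹' U → {a : ℕ | some a ∈ f ⁻¹' U} ∈ F
  intro hn
  exact Filter.mem_of_superset h (fun a ha => by
    simp only [Set.mem_setOf_eq, Set.mem_preimage] at *
    rw [ha]; exact hn)

lemma mem_filter_of_continuous {F : Filter ℕ} {f : Option ℕ → ℝ}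
    (hf : @Continuous _ _ (NFtop F) _ f) {ε : ℝ} (hε : 0 < ε) :
    {a : ℕ | |f (some a) - f none| < ε} ∈ F := by
  have h1 := (@continuous_def _ _ (NFtop F) _ f).mp hf (Metric.ball (f none) ε)
    Metric.isOpen_ball
  have h2 : {a : ℕ | some a ∈ f ⁻¹' Metric.ball (f none) ε} ∈ F :=
    h1 (by simp [Metric.mem_ball, hε])
  refine Filter.mem_of_superset h2 ?_
  intro a ha
  simpa [Real.dist_eq] using ha

lemma mnorm_eq_sum {X : Type*} (μ : X →₀ ℝ) {U : Finset X} (h : μ.support ⊆ U) :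
    mnorm μ = ∑ x ∈ U, |μ x| :=
  Finset.sum_subset h (fun x _ hx => by
    simp [Finsupp.notMem_support_iff.mp hx])

lemma mIntg_eq_sum {X : Type*} (μ : X →₀ ℝ) (f : X → ℝ) {U : Finset X}
    (h : μ.support ⊆ U) :
    mIntg μ f = ∑ x ∈ U, μ x * f x :=
  Finset.sum_subset h (fun x _ hx => by
    simp [Finsupp.notMem_support_iff.mp hx])

lemma fmeasE_mono (ν : ℕ →₀ NNReal) {A B : Set ℕ} (h : A ⊆ B) :
    fmeasE ν A ≤ fmeasE ν B :=
  Finset.sum_le_sum fun x _ =>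
    Set.indicator_le_indicator_of_subset h (fun _ => zero_le) x

lemma fmeasE_union_le (ν : ℕ →₀ NNReal) (A B : Set ℕ) :
    fmeasE ν (A ∪ B) ≤ fmeasE ν A + fmeasE ν B := by
  simp only [fmeasE]
  rw [← Finset.sum_add_distrib]
  refine Finset.sum_le_sum fun x _ => ?_
  by_cases hA : x ∈ A
  · by_cases hB : x ∈ B <;>
      simp [Set.indicator_of_mem, Set.indicator_of_notMem, hA, hB, Set.mem_union]
  · by_cases hB : x ∈ B <;>
      simp [Set.indicator_of_mem, Set.indicator_of_notMem, hA, hB, Set.mem_union]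

lemma fmeasE_le_total (ν : ℕ →₀ NNReal) (A : Set ℕ) :
    fmeasE ν A ≤ ∑ x ∈ ν.support, (ν x : ENNReal) :=
  Finset.sum_le_sum fun x _ => Set.indicator_le_self _ _ x

lemma fmeasE_empty (ν : ℕ →₀ NNReal) : fmeasE ν ∅ = 0 := by
  simp [fmeasE]

end Aux
lemma Submeasure.mono (φ : Submeasure) {A B : Set ℕ} (h : A ⊆ B) : φ.m A ≤ φ.m B := by
  have := φ.le_union A B
  rwa [Set.union_eq_self_of_subset_left h] at this

lemma measOfWeights_coe_finsupp (ν : ℕ →₀ NNReal) (B : Set ℕ) :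
    measOfWeights (fun k => ((ν k : NNReal) : ENNReal)) B = fmeasE ν B := by
  rw [measOfWeights, tsum_eq_sum (s := ν.support)
    (fun k hk => by simp [Set.indicator, Finsupp.notMem_support_iff.mp hk])]
  rfl

lemma imp23 (F : Filter ℕ)
    (h : ∃ φ : Submeasure, φ.IsDensity ∧ ¬ φ.ExhMem Set.univ ∧ ∀ A ∈ F, φ.ExhMem Aᶜ) :
    ∃ φ : Submeasure, φ.NonPathological ∧ φ.LSC ∧ ¬ φ.ExhMem Set.univ ∧
      ∀ A ∈ F, φ.ExhMem Aᶜ := by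
  obtain ⟨φ, ⟨ν, hdisj, hrep⟩, hnx, hFm⟩ := h
  refine ⟨φ, ?_, ?_, hnx, hFm⟩
  · -- NonPathological
    intro A
    apply le_antisymm
    · rw [hrep A]
      refine iSup_le fun j => ?_
      have hdom : ∀ B : Set ℕ, measOfWeights (fun k => (((ν j) k : NNReal) : ENNReal)) B
          ≤ φ.m B := by
        intro B
        rw [measOfWeights_coe_finsupp, hrep B]
        exact le_iSup (fun n => fmeasE (ν n) B) j
      calc fmeasE (ν j) A
          = measOfWeights (fun k => (((ν j) k : NNReal) : ENNReal)) A :=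
            (measOfWeights_coe_finsupp _ _).symm
        _ ≤ _ := le_iSup₂ (f := fun g (_ : ∀ B : Set ℕ, measOfWeights g B ≤ φ.m B) =>
            measOfWeights g A) _ hdom
    · exact iSup₂_le fun g hg => hg A
  · -- LSC
    intro A
    have hmono : Monotone (fun n : ℕ => φ.m (A ∩ Set.Iic n)) := fun a b hab =>
      φ.mono (Set.inter_subset_inter_right A (Set.Iic_subset_Iic.mpr hab))
    have := tendsto_atTop_iSup hmono
    have heq : (⨆ n : ℕ, φ.m (A ∩ Set.Iic n)) = φ.m A := by
      apply le_antisymm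
      · exact iSup_le fun n => φ.mono Set.inter_subset_left
      · rw [hrep A]
        refine iSup_le fun j => ?_
        set N : ℕ := (ν j).support.sup id with hN
        have hle : fmeasE (ν j) A ≤ fmeasE (ν j) (A ∩ Set.Iic N) := by
          refine Finset.sum_le_sum fun x hx => ?_
          by_cases hA : x ∈ A
          · have hxN : x ∈ Set.Iic N := Finset.le_sup (f := id) hx
            rw [Set.indicator_of_mem hA, Set.indicator_of_mem (Set.mem_inter hA hxN)]
          · simp [Set.indicator_of_notMem, hA]
        refine le_trans hle (le_trans ?_ (le_iSup (fun n => φ.m (A ∩ Set.Iic n)) N))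
        rw [hrep (A ∩ Set.Iic N)]
        exact le_iSup (fun n => fmeasE (ν n) (A ∩ Set.Iic N)) j
    rwa [heq] at this
lemma measOfWeights_singleton (g : ℕ → ENNReal) (k : ℕ) :
    measOfWeights g {k} = g k := by
  rw [measOfWeights, tsum_eq_single k (fun j hj => Set.indicator_of_notMem (by simpa using hj) _)]
  exact Set.indicator_of_mem rfl _

lemma imp31 (F : Filter ℕ)
    (h : ∃ φ : Submeasure, φ.NonPathological ∧ φ.LSC ∧ ¬ φ.ExhMem Set.univ ∧
      ∀ A ∈ F, φ.ExhMem Aᶜ) : BJNP (NFtop F) := by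
  classical
  obtain ⟨φ, hnp, -, hnExh, hFm⟩ := h
  -- the infimum of tails is positive
  set δ : ENNReal := ⨅ m : ℕ, φ.m (Set.univ \ Set.Iic m) with hδ
  have hanti : Antitone (fun m : ℕ => φ.m (Set.univ \ Set.Iic m)) := fun a b hab =>
    φ.mono (Set.diff_subset_diff_right (Set.Iic_subset_Iic.mpr hab))
  have hδpos : 0 < δ := by
    rcases eq_or_lt_of_le (zero_le : 0 ≤ δ) with h0 | h0
    · exfalso
      apply hnExh
      have := tendsto_atTop_iInf hanti
      rwa [← hδ, ← h0] at this
    · exact h0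
  set c : ENNReal := min δ 1 with hc
  have hcpos : 0 < c := lt_min hδpos zero_lt_one
  have hcne : c ≠ ⊤ := ne_top_of_le_ne_top ENNReal.one_ne_top (min_le_right _ _)
  have hc2ne : c / 2 ≠ ⊤ := ne_top_of_le_ne_top hcne ENNReal.half_le_self
  have hc2pos : 0 < c / 2 := ENNReal.half_pos hcpos.ne'
  have hhalf : ∀ m : ℕ, c / 2 < φ.m (Set.univ \ Set.Iic m) := fun m =>
    lt_of_lt_of_le (ENNReal.half_lt_self hcpos.ne' hcne)
      (le_trans (min_le_left _ _) (iInf_le _ m))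
  -- choose dominated measures with large tail mass, and finite truncations
  have hex : ∀ m : ℕ, ∃ g : ℕ → ENNReal, (∀ B : Set ℕ, measOfWeights g B ≤ φ.m B) ∧
      ∃ T : Finset ℕ, c / 2 < ∑ k ∈ T, Set.indicator (Set.univ \ Set.Iic m) g k := by
    intro m
    have h1 : c / 2 < ⨆ (g : ℕ → ENNReal) (_ : ∀ B : Set ℕ, measOfWeights g B ≤ φ.m B),
        measOfWeights g (Set.univ \ Set.Iic m) := by
      rw [← hnp (Set.univ \ Set.Iic m)]; exact hhalf m
    obtain ⟨g, hg⟩ := lt_iSup_iff.mp h1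
    obtain ⟨hdom, hval⟩ := lt_iSup_iff.mp hg
    refine ⟨g, hdom, ?_⟩
    rw [measOfWeights, ENNReal.tsum_eq_iSup_sum] at hval
    exact lt_iSup_iff.mp hval
  choose g hdom T hT using hex
  set w : ℕ → ℕ → ENNReal := fun m k => Set.indicator (Set.univ \ Set.Iic m) (g m) k with hw
  have hwfin : ∀ m k, w m k ≠ ⊤ := by
    intro m k
    have h1 : w m k ≤ g m k := Set.indicator_le_self _ _ k
    have h2 : g m k ≤ φ.m {k} := by
      rw [← measOfWeights_singleton (g m) k]; exact hdom m {k}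
    exact (lt_of_le_of_lt (le_trans h1 h2) (φ.lt_top_singleton k)).ne
  set s : ℕ → ENNReal := fun m => ∑ k ∈ T m, w m k with hs
  have hsne : ∀ m, s m ≠ ⊤ := by
    intro m
    simp only [hs]
    exact (ENNReal.sum_lt_top.mpr (fun k _ => lt_top_iff_ne_top.mpr (hwfin m k))).ne
  have hslb : ∀ m, c / 2 < s m := hT
  set r : ℕ → ℕ → ℝ := fun m k => (w m k).toReal with hr
  have hrnn : ∀ m k, 0 ≤ r m k := fun m k => ENNReal.toReal_nonneg
  set S : ℕ → ℝ := fun m => (s m).toReal with hS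
  have hSsum : ∀ m, S m = ∑ k ∈ T m, r m k := fun m =>
    ENNReal.toReal_sum (fun k _ => hwfin m k)
  set c' : ℝ := (c / 2).toReal with hc'
  have hc'pos : 0 < c' := ENNReal.toReal_pos hc2pos.ne' hc2ne
  have hc'S : ∀ m, c' ≤ S m := fun m => ENNReal.toReal_mono (hsne m) (hslb m).le
  have hSpos : ∀ m, 0 < S m := fun m => lt_of_lt_of_le hc'pos (hc'S m)
  have hS2 : ∀ m, (0:ℝ) < 2 * S m := fun m => by linarith [hSpos m]
  -- define the BJN sequence
  set μ : ℕ → (Option ℕ →₀ ℝ) := fun m =>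
    Finsupp.onFinset (insert none ((T m).image some))
      (fun x => Option.elim x (-(1/2)) (fun k => if k ∈ T m then r m k / (2 * S m) else 0))
      (by
        intro x hx
        match x with
        | none => exact Finset.mem_insert_self _ _
        | some k =>
          simp only [Option.elim] at hx
          by_cases hk : k ∈ T m
          · exact Finset.mem_insert_of_mem (Finset.mem_image_of_mem some hk)
          · simp [hk] at hx) with hμ
  have hμnone : ∀ m, μ m none = -(1/2) := fun m => rfl
  have hμsome : ∀ m k, μ m (some k) = if k ∈ T m then r m k / (2 * S m) else 0 :=
    fun m k => rfl
  have hμsupp : ∀ m, (μ m).support ⊆ insert none ((T m).image some) := fun m =>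
    Finsupp.support_onFinset_subset
  have hnone_not : ∀ m, none ∉ (T m).image some := by
    intro m hmem
    obtain ⟨k, -, hk⟩ := Finset.mem_image.mp hmem
    exact Option.some_ne_none _ hk
  have htri : ∀ x y : ℝ, |x - y| ≤ |x| + |y| := fun x y => by
    calc |x - y| = |x + (-y)| := by rw [sub_eq_add_neg]
      _ ≤ |x| + |(-y)| := abs_add_le x (-y)
      _ = |x| + |y| := by rw [abs_neg]
  refine ⟨μ, fun m => ?_, ?_⟩
  · -- mnorm = 1
    rw [mnorm_eq_sum (μ m) (hμsupp m), Finset.sum_insert (hnone_not m),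
      Finset.sum_image (fun a _ b _ h => Option.some_injective _ h)]
    have h1 : ∀ k ∈ T m, |μ m (some k)| = r m k / (2 * S m) := by
      intro k hk
      rw [hμsome m k, if_pos hk, abs_of_nonneg (div_nonneg (hrnn m k) (hS2 m).le)]
    rw [Finset.sum_congr rfl h1, ← Finset.sum_div, ← hSsum m, hμnone m]
    rw [abs_of_nonpos (by norm_num)]
    have h2 : S m / (2 * S m) = 1/2 := by
      rw [div_eq_iff (hS2 m).ne']; ring
    rw [h2]; norm_num
  · -- tendsto
    intro f hf hfb
    obtain ⟨C, hC⟩ := hfb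
    have hC0 : 0 ≤ C := le_trans (abs_nonneg _) (hC none)
    rw [Metric.tendsto_atTop]
    intro ε hε
    set A : Set ℕ := {a : ℕ | |f (some a) - f none| < ε / 2} with hA
    have hAF : A ∈ F := mem_filter_of_continuous hf (by positivity)
    have hExhA := hFm A hAF
    set ε' : ENNReal := ENNReal.ofReal (c' * ε / (4 * (C + 1))) with hε'
    have hε'pos : 0 < ε' := ENNReal.ofReal_pos.mpr (by positivity)
    obtain ⟨M, hM⟩ := (ENNReal.tendsto_atTop_zero.mp hExhA) ε' hε'pos
    refine ⟨M, fun m hm => ?_⟩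
    -- compute the integral
    have hintg : mIntg (μ m) f =
        ∑ k ∈ T m, (r m k / (2 * S m)) * (f (some k) - f none) := by
      rw [mIntg_eq_sum (μ m) f (hμsupp m), Finset.sum_insert (hnone_not m),
        Finset.sum_image (fun a _ b _ h => Option.some_injective _ h), hμnone m]
      have h1 : ∀ k ∈ T m, μ m (some k) * f (some k)
          = (r m k / (2 * S m)) * f (some k) := by
        intro k hk; rw [hμsome m k, if_pos hk]
      rw [Finset.sum_congr rfl h1]
      have h2 : ∑ k ∈ T m, (r m k / (2 * S m)) * (f (some k) - f none)
          = (∑ k ∈ T m, (r m k / (2 * S m)) * f (some k))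
            - (∑ k ∈ T m, r m k / (2 * S m)) * f none := by
        rw [Finset.sum_mul, ← Finset.sum_sub_distrib]
        exact Finset.sum_congr rfl (fun k _ => by ring)
      rw [h2, ← Finset.sum_div, ← hSsum m]
      have h3 : S m / (2 * S m) = 1/2 := by
        rw [div_eq_iff (hS2 m).ne']; ring
      rw [h3]; ring
    -- bound the bad part
    set Tb : Finset ℕ := (T m).filter (fun k => k ∉ A) with hTb
    have hbad : ∑ k ∈ Tb, r m k ≤ c' * ε / (4 * (C + 1)) := by
      have h1 : (∑ k ∈ Tb, w m k) ≤ φ.m (Aᶜ \ Set.Iic m) := by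
        have h2 : ∀ k ∈ Tb, w m k ≤ Set.indicator (Aᶜ \ Set.Iic m) (g m) k := by
          intro k hk
          obtain ⟨-, hkA⟩ := Finset.mem_filter.mp hk
          by_cases hkm : k ∈ Set.Iic m
          · have : w m k = 0 := by
              simp only [hw]
              exact Set.indicator_of_notMem (fun hmem => hmem.2 hkm) _
            rw [this]; exact zero_le
          · have hk1 : k ∈ (Set.univ \ Set.Iic m : Set ℕ) := ⟨trivial, hkm⟩
            have hk2 : k ∈ (Aᶜ \ Set.Iic m : Set ℕ) := ⟨hkA, hkm⟩
            have : w m k = g m k := by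
              simp only [hw]; exact Set.indicator_of_mem hk1 _
            rw [this, Set.indicator_of_mem hk2]
        calc (∑ k ∈ Tb, w m k) ≤ ∑ k ∈ Tb, Set.indicator (Aᶜ \ Set.Iic m) (g m) k :=
              Finset.sum_le_sum h2
          _ ≤ ∑' k, Set.indicator (Aᶜ \ Set.Iic m) (g m) k := ENNReal.sum_le_tsum _
          _ ≤ φ.m (Aᶜ \ Set.Iic m) := hdom m _
      have h3 : (∑ k ∈ Tb, w m k) ≤ ε' := le_trans h1 (hM m hm)
      have h4 : (∑ k ∈ Tb, w m k).toReal ≤ ε'.toReal :=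
        ENNReal.toReal_mono ENNReal.ofReal_ne_top h3
      rw [ENNReal.toReal_sum (fun k _ => hwfin m k)] at h4
      rw [hε', ENNReal.toReal_ofReal (by positivity)] at h4
      exact h4
    -- final estimate
    set G : ℝ := ∑ k ∈ (T m).filter (fun k => k ∈ A), r m k with hG
    set Bv : ℝ := ∑ k ∈ Tb, r m k with hB
    have hGB : G + Bv = S m := by
      rw [hG, hB, hSsum m, hTb]
      exact Finset.sum_filter_add_sum_filter_not (T m) (fun k => k ∈ A) _
    have hG0 : 0 ≤ G := Finset.sum_nonneg fun k _ => hrnn m k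
    have hB0 : 0 ≤ Bv := Finset.sum_nonneg fun k _ => hrnn m k
    have habs : |mIntg (μ m) f| ≤ (G * (ε/2) + Bv * (2*C)) / (2 * S m) := by
      rw [hintg]
      have h6 : |∑ k ∈ T m, (r m k / (2 * S m)) * (f (some k) - f none)|
          ≤ (∑ k ∈ T m, r m k * |f (some k) - f none|) / (2 * S m) := by
        refine le_trans (Finset.abs_sum_le_sum_abs _ _) (le_of_eq ?_)
        rw [Finset.sum_div]
        refine Finset.sum_congr rfl fun k _ => ?_
        rw [abs_mul, abs_of_nonneg (div_nonneg (hrnn m k) (hS2 m).le), div_mul_eq_mul_div]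
      refine le_trans h6 ?_
      refine (div_le_div_iff_of_pos_right (hS2 m)).mpr ?_
      rw [← Finset.sum_filter_add_sum_filter_not (T m) (fun k => k ∈ A)
        (fun k => r m k * |f (some k) - f none|)]
      refine add_le_add ?_ ?_
      · rw [hG, Finset.sum_mul]
        refine Finset.sum_le_sum fun k hk => ?_
        obtain ⟨-, hkA⟩ := Finset.mem_filter.mp hk
        exact mul_le_mul_of_nonneg_left hkA.le (hrnn m k)
      · rw [hB, Finset.sum_mul]
        refine Finset.sum_le_sum fun k hk => ?_
        refine mul_le_mul_of_nonneg_left ?_ (hrnn m k)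
        calc |f (some k) - f none| ≤ |f (some k)| + |f none| := htri _ _
          _ ≤ C + C := add_le_add (hC _) (hC _)
          _ = 2 * C := by ring
    have hbad2 : Bv * (4 * (C + 1)) ≤ c' * ε := by
      rw [← le_div_iff₀ (by positivity : (0:ℝ) < 4 * (C+1))]
      exact hbad
    have hfin : (G * (ε/2) + Bv * (2*C)) / (2 * S m) < ε := by
      rw [div_lt_iff₀ (hS2 m)]
      nlinarith [mul_le_mul_of_nonneg_right (hc'S m) hε.le, mul_pos (hSpos m) hε,
        mul_nonneg hB0 hC0, mul_nonneg hB0 hε.le, mul_nonneg hG0 hε.le]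
    rw [Real.dist_eq, sub_zero]
    exact lt_of_le_of_lt habs hfin
section Imp12
variable {F : Filter ℕ}

/-- Finset of natural numbers in the support of the ω-part. -/
def suppw (μ : Option ℕ →₀ ℝ) : Finset ℕ :=
  Finset.preimage μ.support some (fun a _ b _ h => Option.some_injective _ h)

lemma mem_suppw {μ : Option ℕ →₀ ℝ} {k : ℕ} : k ∈ suppw μ ↔ μ (some k) ≠ 0 := by
  exact Finset.mem_preimage.trans Finsupp.mem_support_iff

lemma supp_subset (μ : Option ℕ →₀ ℝ) :
    μ.support ⊆ insert none ((suppw μ).image some) := by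
  intro x hx
  match x with
  | none => exact Finset.mem_insert_self _ _
  | some k =>
    refine Finset.mem_insert_of_mem (Finset.mem_image_of_mem some ?_)
    rw [mem_suppw]
    exact Finsupp.mem_support_iff.mp hx

lemma none_not_mem_image (s : Finset ℕ) : none ∉ s.image some := by
  intro hmem
  obtain ⟨k, -, hk⟩ := Finset.mem_image.mp hmem
  exact Option.some_ne_none _ hk

/-- ω-mass of a finitely supported signed measure on `Option ℕ`. -/
def wmass (μ : Option ℕ →₀ ℝ) : ℝ := ∑ k ∈ suppw μ, |μ (some k)|

lemma mnorm_split (μ : Option ℕ →₀ ℝ) : mnorm μ = |μ none| + wmass μ := by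
  rw [mnorm_eq_sum μ (supp_subset μ), Finset.sum_insert (none_not_mem_image _),
    Finset.sum_image (fun a _ b _ h => Option.some_injective _ h)]
  rfl

lemma mIntg_split (μ : Option ℕ →₀ ℝ) (f : Option ℕ → ℝ) :
    mIntg μ f = μ none * f none + ∑ k ∈ suppw μ, μ (some k) * f (some k) := by
  rw [mIntg_eq_sum μ f (supp_subset μ), Finset.sum_insert (none_not_mem_image _),
    Finset.sum_image (fun a _ b _ h => Option.some_injective _ h)]

end Imp12
section Imp12b
variable {F : Filter ℕ}

lemma tendsto_point (hF : IsFreeFilter F) {μ : ℕ → (Option ℕ →₀ ℝ)}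
    (htend : ∀ f : Option ℕ → ℝ, @Continuous _ _ (NFtop F) _ f → (∃ C : ℝ, ∀ x, |f x| ≤ C) →
      Tendsto (fun n => mIntg (μ n) f) atTop (nhds 0)) (k : ℕ) :
    Tendsto (fun n => μ n (some k)) atTop (nhds 0) := by
  set f : Option ℕ → ℝ := fun x => if x = some k then 1 else 0 with hf
  have hcont : @Continuous _ _ (NFtop F) _ f := by
    apply continuous_NFtop
    have h1 : {a : ℕ | f (some a) = f none} ⊇ {k}ᶜ := by
      intro a ha
      simp only [Set.mem_compl_iff, Set.mem_singleton_iff] at ha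
      simp [hf, ha, Option.some_injective]
    exact Filter.mem_of_superset (hF.2 ((Set.finite_singleton k).compl_mem_cofinite)) h1
  have hbdd : ∃ C : ℝ, ∀ x, |f x| ≤ C := ⟨1, fun x => by
    by_cases hx : x = some k <;> simp [hf, hx]⟩
  have := htend f hcont hbdd
  have heq : ∀ n, mIntg (μ n) f = μ n (some k) := by
    intro n
    rw [mIntg]
    have h2 : ∀ x ∈ (μ n).support, μ n x * f x = if x = some k then μ n x else 0 := by
      intro x hx
      by_cases hxk : x = some k <;> simp [hf, hxk]
    rw [Finset.sum_congr rfl h2, Finset.sum_ite_eq' (μ n).support (some k) (fun x => μ n x)]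
    by_cases hmem : some k ∈ (μ n).support
    · rw [if_pos hmem]
    · rw [if_neg hmem]
      exact (Finsupp.notMem_support_iff.mp hmem).symm
  simpa [heq] using this

lemma tendsto_finsum (hF : IsFreeFilter F) {μ : ℕ → (Option ℕ →₀ ℝ)}
    (htend : ∀ f : Option ℕ → ℝ, @Continuous _ _ (NFtop F) _ f → (∃ C : ℝ, ∀ x, |f x| ≤ C) →
      Tendsto (fun n => mIntg (μ n) f) atTop (nhds 0)) (P : Finset ℕ) :
    Tendsto (fun n => ∑ k ∈ P, |μ n (some k)|) atTop (nhds 0) := by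
  have h1 : ∀ k ∈ P, Tendsto (fun n => |μ n (some k)|) atTop (nhds 0) := by
    intro k _
    have := (tendsto_point hF htend k).abs
    simpa using this
  have := tendsto_finset_sum P h1
  simpa using this

lemma exists_large (hF : IsFreeFilter F) {μ : ℕ → (Option ℕ →₀ ℝ)}
    (hn1 : ∀ n, mnorm (μ n) = 1)
    (htend : ∀ f : Option ℕ → ℝ, @Continuous _ _ (NFtop F) _ f → (∃ C : ℝ, ∀ x, |f x| ≤ C) →
      Tendsto (fun n => mIntg (μ n) f) atTop (nhds 0)) :
    ∀ N : ℕ, ∃ n, N ≤ n ∧ 1/3 ≤ wmass (μ n) := by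
  intro N
  by_contra hcon
  push_neg at hcon
  have hone : @Continuous _ _ (NFtop F) _ (fun _ : Option ℕ => (1:ℝ)) :=
    continuous_NFtop (by simpa using Filter.univ_mem)
  have htot := htend (fun _ => 1) hone ⟨1, fun x => by norm_num⟩
  rw [Metric.tendsto_atTop] at htot
  obtain ⟨N₀, hN₀⟩ := htot (1/3) (by norm_num)
  set n := max N N₀ with hn
  have h1 : wmass (μ n) < 1/3 := hcon n (le_max_left _ _)
  have h2 : |μ n none| = 1 - wmass (μ n) := by
    have := mnorm_split (μ n)
    rw [hn1 n] at this
    linarith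
  have h3 : mIntg (μ n) (fun _ => 1) = μ n none + ∑ k ∈ suppw (μ n), μ n (some k) := by
    rw [mIntg_split]; ring_nf
  have h4 : |∑ k ∈ suppw (μ n), μ n (some k)| ≤ wmass (μ n) :=
    Finset.abs_sum_le_sum_abs _ _
  have h5 := hN₀ n (le_max_right _ _)
  rw [Real.dist_eq, sub_zero, h3] at h5
  have h6 : |μ n none| - |∑ k ∈ suppw (μ n), μ n (some k)|
      ≤ |μ n none + ∑ k ∈ suppw (μ n), μ n (some k)| := by
    have := abs_add_le (μ n none + ∑ k ∈ suppw (μ n), μ n (some k))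
      (-(∑ k ∈ suppw (μ n), μ n (some k)))
    simp only [add_neg_cancel_right, abs_neg] at this
    linarith
  rw [h2] at h6
  linarith

end Imp12b
section Imp12c
variable {F : Filter ℕ}

lemma exists_step (hF : IsFreeFilter F) {μ : ℕ → (Option ℕ →₀ ℝ)}
    (hn1 : ∀ n, mnorm (μ n) = 1)
    (htend : ∀ f : Option ℕ → ℝ, @Continuous _ _ (NFtop F) _ f → (∃ C : ℝ, ∀ x, |f x| ≤ C) →
      Tendsto (fun n => mIntg (μ n) f) atTop (nhds 0)) :
    ∀ (P : Finset ℕ) (N : ℕ) (e : ℝ), 0 < e → ∃ n, N ≤ n ∧ 1/3 ≤ wmass (μ n) ∧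
      ∑ k ∈ P, |μ n (some k)| < e := by
  intro P N e he
  have h1 := tendsto_finsum hF htend P
  rw [Metric.tendsto_atTop] at h1
  obtain ⟨N₀, hN₀⟩ := h1 e he
  obtain ⟨n, hn, hw⟩ := exists_large hF hn1 htend (max N N₀)
  refine ⟨n, le_trans (le_max_left _ _) hn, hw, ?_⟩
  have h2 := hN₀ n (le_trans (le_max_right _ _) hn)
  rw [Real.dist_eq, sub_zero] at h2
  exact lt_of_le_of_lt (le_abs_self _) h2

lemma imp12 (F : Filter ℕ) (hF : IsFreeFilter F) (hB : BJNP (NFtop F)) :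
    ∃ φ : Submeasure, φ.IsDensity ∧ ¬ φ.ExhMem Set.univ ∧ ∀ A ∈ F, φ.ExhMem Aᶜ := by
  classical
  obtain ⟨μ, hn1, htend⟩ := hB
  have hstep := exists_step hF hn1 htend
  set eb : ℕ → ℝ := fun j => min (1/12) (1/(j+1)) with heb
  have hebpos : ∀ j, 0 < eb j := fun j => lt_min (by norm_num) (by positivity)
  have heble : ∀ j, eb j ≤ 1/12 := fun j => min_le_left _ _
  -- recursive construction of indices and accumulated supports
  set st : ℕ → ℕ × Finset ℕ := fun j => Nat.rec
    ((hstep ∅ 0 (eb 0) (hebpos 0)).choose,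
      suppw (μ (hstep ∅ 0 (eb 0) (hebpos 0)).choose))
    (fun j ih =>
      ((hstep ih.2 (ih.1 + 1) (eb (j+1)) (hebpos (j+1))).choose,
       ih.2 ∪ suppw (μ (hstep ih.2 (ih.1 + 1) (eb (j+1)) (hebpos (j+1))).choose))) j
    with hstdef
  set nn : ℕ → ℕ := fun j => (st j).1 with hnn
  set P : ℕ → Finset ℕ := fun j => (st j).2 with hP
  set Pp : ℕ → Finset ℕ := fun j => match j with | 0 => ∅ | (i+1) => P i with hPp
  have hspecS : ∀ j, nn j + 1 ≤ nn (j+1) ∧ 1/3 ≤ wmass (μ (nn (j+1))) ∧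
      ∑ k ∈ P j, |μ (nn (j+1)) (some k)| < eb (j+1) := fun j =>
    (hstep (P j) (nn j + 1) (eb (j+1)) (hebpos (j+1))).choose_spec
  have hspec0 := (hstep ∅ 0 (eb 0) (hebpos 0)).choose_spec
  have hP0 : P 0 = suppw (μ (nn 0)) := rfl
  have hPS : ∀ j, P (j+1) = P j ∪ suppw (μ (nn (j+1))) := fun j => rfl
  have hPpU : ∀ j, P j = Pp j ∪ suppw (μ (nn j)) := by
    intro j
    match j with
    | 0 => rw [hP0]; exact (Finset.empty_union _).symm
    | (i+1) => exact hPS i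
  have hwlarge : ∀ j, 1/3 ≤ wmass (μ (nn j)) := by
    intro j
    match j with
    | 0 => exact hspec0.2.1
    | (i+1) => exact (hspecS i).2.1
  have hsmall : ∀ j, ∑ k ∈ Pp j, |μ (nn j) (some k)| < eb j := by
    intro j
    match j with
    | 0 => show ∑ k ∈ (∅ : Finset ℕ), _ < _; simpa using hebpos 0
    | (i+1) => exact (hspecS i).2.2
  have hmono' : ∀ j, nn j < nn (j+1) := fun j => (hspecS j).1
  have hPmono : ∀ i j, i ≤ j → P i ⊆ P j := by
    intro i j hij
    induction j, hij using Nat.le_induction with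
    | base => exact subset_rfl
    | succ j hij ih => exact le_trans ih (by rw [hPS j]; exact Finset.subset_union_left)
  have hsubPp : ∀ i j, i < j → suppw (μ (nn i)) ⊆ Pp j := by
    intro i j hij
    match j, hij with
    | (t+1), hij =>
      have h1 : suppw (μ (nn i)) ⊆ P i := by
        rw [hPpU i]; exact Finset.subset_union_right
      exact le_trans h1 (hPmono i t (Nat.lt_succ_iff.mp hij))
  -- the disjointly supported measures
  set U : ℕ → Finset ℕ := fun j => suppw (μ (nn j)) \ Pp j with hU
  set ν : ℕ → (ℕ →₀ NNReal) := fun j => Finsupp.onFinset (U j)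
    (fun k => if k ∈ U j then Real.toNNReal |μ (nn j) (some k)| else 0)
    (fun k hk => by
      by_cases h : k ∈ U j
      · exact h
      · simp [h] at hk) with hν
  have hνapply : ∀ j k, ν j k = if k ∈ U j then Real.toNNReal |μ (nn j) (some k)| else 0 :=
    fun j k => rfl
  have hνsupp : ∀ j, (ν j).support = U j := by
    intro j
    apply Finset.Subset.antisymm Finsupp.support_onFinset_subset
    intro k hk
    rw [Finsupp.mem_support_iff, hνapply j k, if_pos hk]
    have hks : k ∈ suppw (μ (nn j)) := (Finset.mem_sdiff.mp hk).1
    rw [mem_suppw] at hks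
    simp only [ne_eq, Real.toNNReal_eq_zero, not_le]
    exact abs_pos.mpr hks
  have hdisjU : ∀ i j, i < j → Disjoint (U i) (U j) := by
    intro i j hij
    rw [Finset.disjoint_left]
    intro x hxi hxj
    have h1 : x ∈ suppw (μ (nn i)) := (Finset.mem_sdiff.mp hxi).1
    have h2 : x ∈ Pp j := hsubPp i j hij h1
    exact (Finset.mem_sdiff.mp hxj).2 h2
  have hdisj : ∀ i j, i ≠ j → Disjoint (ν i).support (ν j).support := by
    intro i j hij
    rw [hνsupp, hνsupp]
    rcases lt_or_gt_of_ne hij with h | h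
    · exact hdisjU i j h
    · exact (hdisjU j i h).symm
  -- real sums over U j
  have hcoe : ∀ (x : ℝ), ((Real.toNNReal x : NNReal) : ENNReal) = ENNReal.ofReal x :=
    fun x => rfl
  have hfmeasE : ∀ j (A : Set ℕ), fmeasE (ν j) A =
      ENNReal.ofReal (∑ k ∈ U j, if k ∈ A then |μ (nn j) (some k)| else 0) := by
    intro j A
    rw [fmeasE, hνsupp j, ENNReal.ofReal_sum_of_nonneg
      (fun k _ => by by_cases hk : k ∈ A <;> simp [hk, abs_nonneg])]
    refine Finset.sum_congr rfl fun k hk => ?_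
    by_cases hkA : k ∈ A
    · rw [Set.indicator_of_mem hkA, if_pos hkA, hνapply j k, if_pos hk, hcoe]
    · rw [Set.indicator_of_notMem hkA, if_neg hkA, ENNReal.ofReal_zero]
  have hUsum_le : ∀ j, ∑ k ∈ U j, |μ (nn j) (some k)| ≤ 1 := by
    intro j
    have h1 : ∑ k ∈ U j, |μ (nn j) (some k)| ≤ wmass (μ (nn j)) :=
      Finset.sum_le_sum_of_subset_of_nonneg Finset.sdiff_subset
        (fun k _ _ => abs_nonneg _)
    have h2 := mnorm_split (μ (nn j))
    rw [hn1 (nn j)] at h2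
    have h3 : wmass (μ (nn j)) ≤ 1 := by
      have := abs_nonneg (μ (nn j) none); linarith
    linarith
  have htot : ∀ j (A : Set ℕ), fmeasE (ν j) A ≤ 1 := by
    intro j A
    rw [hfmeasE j A]
    calc ENNReal.ofReal (∑ k ∈ U j, if k ∈ A then |μ (nn j) (some k)| else 0)
        ≤ ENNReal.ofReal (∑ k ∈ U j, |μ (nn j) (some k)|) := by
          apply ENNReal.ofReal_le_ofReal
          refine Finset.sum_le_sum fun k _ => ?_
          by_cases hk : k ∈ A <;> simp [hk, abs_nonneg, le_refl]
      _ ≤ ENNReal.ofReal 1 := ENNReal.ofReal_le_ofReal (hUsum_le j)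
      _ = 1 := ENNReal.ofReal_one
  -- mass lower bound
  have hUsum_ge : ∀ j, 1/4 ≤ ∑ k ∈ U j, |μ (nn j) (some k)| := by
    intro j
    have hsub : suppw (μ (nn j)) ⊆ U j ∪ Pp j := by
      intro x hx
      by_cases hxP : x ∈ Pp j
      · exact Finset.mem_union_right _ hxP
      · exact Finset.mem_union_left _ (Finset.mem_sdiff.mpr ⟨hx, hxP⟩)
    have h1 : wmass (μ (nn j)) ≤ (∑ k ∈ U j, |μ (nn j) (some k)|)
        + ∑ k ∈ Pp j, |μ (nn j) (some k)| := by
      calc wmass (μ (nn j)) ≤ ∑ k ∈ U j ∪ Pp j, |μ (nn j) (some k)| :=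
            Finset.sum_le_sum_of_subset_of_nonneg hsub (fun k _ _ => abs_nonneg _)
        _ ≤ _ := by
            have := Finset.sum_union_inter (s₁ := U j) (s₂ := Pp j)
              (f := fun k => |μ (nn j) (some k)|)
            have h2 : 0 ≤ ∑ k ∈ U j ∩ Pp j, |μ (nn j) (some k)| :=
              Finset.sum_nonneg fun k _ => abs_nonneg _
            linarith
    have h2 := hwlarge j
    have h3 := hsmall j
    have h4 := heble j
    linarith
  have hlow : ∀ j, ENNReal.ofReal (1/4) ≤ fmeasE (ν j) Set.univ := by
    intro j
    rw [hfmeasE j Set.univ]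
    apply ENNReal.ofReal_le_ofReal
    simpa using hUsum_ge j
  -- the submeasure
  set φ : Submeasure :=
    { m := fun A => ⨆ j, fmeasE (ν j) A
      empty := by simp [fmeasE_empty]
      lt_top_singleton := fun k =>
        lt_of_le_of_lt (iSup_le fun j => htot j _) ENNReal.one_lt_top
      le_union := fun A B => iSup_mono fun j => fmeasE_mono _ Set.subset_union_left
      union_le := fun A B => iSup_le fun j =>
        le_trans (fmeasE_union_le (ν j) A B)
          (add_le_add (le_iSup (fun i => fmeasE (ν i) A) j)
            (le_iSup (fun i => fmeasE (ν i) B) j)) } with hφ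
  refine ⟨φ, ⟨ν, hdisj, fun A => rfl⟩, ?_, ?_⟩
  · -- not exhaustive on univ
    intro hT
    obtain ⟨N, hN⟩ := ENNReal.tendsto_atTop_zero.mp hT (ENNReal.ofReal (1/8))
      (ENNReal.ofReal_pos.mpr (by norm_num))
    -- find j whose support avoids Iic N
    have hJfin : {j : ℕ | ∃ x ∈ (ν j).support, x ≤ N}.Finite := by
      set wit : ℕ → ℕ := fun j => if h : ∃ x ∈ (ν j).support, x ≤ N then h.choose else 0
        with hwit
      apply Set.Finite.of_finite_image (f := wit)
      · refine Set.Finite.subset (Set.finite_Iic N) ?_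
        rintro y ⟨j, hj, rfl⟩
        simp only [Set.mem_setOf_eq] at hj
        rw [hwit]
        simp only [dif_pos hj]
        exact hj.choose_spec.2
      · intro i hi j hj hij
        simp only [Set.mem_setOf_eq] at hi hj
        by_contra hne
        have h1 : wit i ∈ (ν i).support := by
          rw [hwit]; simp only [dif_pos hi]; exact hi.choose_spec.1
        have h2 : wit j ∈ (ν j).support := by
          rw [hwit]; simp only [dif_pos hj]; exact hj.choose_spec.1
        rw [hij] at h1
        exact Finset.disjoint_left.mp (hdisj i j hne) (hij ▸ h1) h2
    obtain ⟨b, hb⟩ := hJfin.bddAbove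
    have hbj : ∀ x ∈ (ν (b+1)).support, ¬ x ≤ N := by
      intro x hx hxN
      have : b + 1 ∈ {j : ℕ | ∃ x ∈ (ν j).support, x ≤ N} := ⟨x, hx, hxN⟩
      have := hb this
      omega
    have hge : ENNReal.ofReal (1/4) ≤ φ.m (Set.univ \ Set.Iic N) := by
      have h1 : fmeasE (ν (b+1)) (Set.univ \ Set.Iic N) = fmeasE (ν (b+1)) Set.univ := by
        rw [fmeasE, fmeasE]
        refine Finset.sum_congr rfl fun x hx => ?_
        have hx1 : x ∈ (Set.univ \ Set.Iic N : Set ℕ) := ⟨trivial, hbj x hx⟩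
        rw [Set.indicator_of_mem hx1, Set.indicator_of_mem (Set.mem_univ x)]
      calc ENNReal.ofReal (1/4) ≤ fmeasE (ν (b+1)) Set.univ := hlow (b+1)
        _ = fmeasE (ν (b+1)) (Set.univ \ Set.Iic N) := h1.symm
        _ ≤ φ.m (Set.univ \ Set.Iic N) := le_iSup (fun j => fmeasE (ν j) _) (b+1)
    have hlt := hN N le_rfl
    have : ENNReal.ofReal (1/4) ≤ ENNReal.ofReal (1/8) := le_trans hge hlt
    rw [ENNReal.ofReal_le_ofReal_iff (by norm_num)] at this
    linarith
  · -- exhaustiveness on complements of filter sets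
    intro A hA
    -- the sign function
    set sgn : ℕ → ℝ := fun k =>
      if h : ∃ j, k ∈ (ν j).support then
        (if 0 ≤ μ (nn h.choose) (some k) then 1 else -1) else 0 with hsgn
    set f : Option ℕ → ℝ := fun x => Option.elim x 0 (fun k => if k ∈ A then 0 else sgn k)
      with hfdef
    have hfc : @Continuous _ _ (NFtop F) _ f := by
      apply continuous_NFtop
      refine Filter.mem_of_superset hA fun a ha => ?_
      show f (some a) = f none
      simp [hfdef, ha]
    have hfb : ∀ x, |f x| ≤ 1 := by
      intro x
      match x with
      | none => simp [hfdef, Option.elim]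
      | some k =>
        by_cases hk : k ∈ A
        · simp [hfdef, hk, Option.elim]
        · simp only [hfdef, Option.elim, if_neg hk, hsgn]
          by_cases h : ∃ j, k ∈ (ν j).support
          · rw [dif_pos h]
            split <;> norm_num
          · rw [dif_neg h]; norm_num
    have hnmono : StrictMono nn := strictMono_nat_of_lt_succ hmono'
    have htf := (htend f hfc ⟨1, hfb⟩).comp hnmono.tendsto_atTop
    -- the key identity
    set R : ℕ → ℝ := fun j => ∑ k ∈ U j, if k ∈ A then 0 else |μ (nn j) (some k)| with hR
    have hRnn : ∀ j, 0 ≤ R j := fun j => Finset.sum_nonneg fun k _ => by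
      by_cases hk : k ∈ A <;> simp [hk, abs_nonneg]
    have hkey : ∀ j, R j ≤ mIntg (μ (nn j)) f + eb j := by
      intro j
      have hsplit : ∑ k ∈ suppw (μ (nn j)), μ (nn j) (some k) * f (some k)
          = (∑ k ∈ suppw (μ (nn j)) ∩ Pp j, μ (nn j) (some k) * f (some k))
            + ∑ k ∈ U j, μ (nn j) (some k) * f (some k) := by
        rw [hU]
        exact (Finset.sum_inter_add_sum_sdiff _ _ _).symm
      have hUterm : ∀ k ∈ U j, μ (nn j) (some k) * f (some k)
          = (if k ∈ A then 0 else |μ (nn j) (some k)|) := by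
        intro k hk
        by_cases hkA : k ∈ A
        · simp [hfdef, hkA]
        · have hkν : k ∈ (ν j).support := by rw [hνsupp]; exact hk
          have hex : ∃ i, k ∈ (ν i).support := ⟨j, hkν⟩
          have hchoose : hex.choose = j := by
            by_contra hne
            exact Finset.disjoint_left.mp (hdisj _ _ hne) hex.choose_spec hkν
          simp only [hfdef, Option.elim, if_neg hkA, hsgn, dif_pos hex, hchoose]
          by_cases hsgn2 : 0 ≤ μ (nn j) (some k)
          · rw [if_pos hsgn2, abs_of_nonneg hsgn2, mul_one]
          · rw [if_neg hsgn2, abs_of_neg (not_le.mp hsgn2)]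
            ring
      have herr : |∑ k ∈ suppw (μ (nn j)) ∩ Pp j, μ (nn j) (some k) * f (some k)| ≤
          ∑ k ∈ Pp j, |μ (nn j) (some k)| := by
        calc |∑ k ∈ suppw (μ (nn j)) ∩ Pp j, μ (nn j) (some k) * f (some k)|
            ≤ ∑ k ∈ suppw (μ (nn j)) ∩ Pp j, |μ (nn j) (some k) * f (some k)| :=
              Finset.abs_sum_le_sum_abs _ _
          _ ≤ ∑ k ∈ suppw (μ (nn j)) ∩ Pp j, |μ (nn j) (some k)| := by
              refine Finset.sum_le_sum fun k _ => ?_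
              rw [abs_mul]
              calc |μ (nn j) (some k)| * |f (some k)|
                  ≤ |μ (nn j) (some k)| * 1 :=
                    mul_le_mul_of_nonneg_left (hfb (some k)) (abs_nonneg _)
                _ = |μ (nn j) (some k)| := mul_one _
          _ ≤ ∑ k ∈ Pp j, |μ (nn j) (some k)| :=
              Finset.sum_le_sum_of_subset_of_nonneg Finset.inter_subset_right
                (fun k _ _ => abs_nonneg _)
      have hintg : mIntg (μ (nn j)) f =
          (∑ k ∈ suppw (μ (nn j)) ∩ Pp j, μ (nn j) (some k) * f (some k)) + R j := by
        rw [mIntg_split, hsplit, Finset.sum_congr rfl hUterm]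
        have : f none = 0 := rfl
        rw [this]; ring
      have h7 := hsmall j
      have h8 := abs_le.mp herr
      rw [hintg]
      linarith [h8.1]
    -- R j tends to zero
    have hebto : Tendsto eb atTop (nhds 0) := by
      apply squeeze_zero (fun j => (hebpos j).le) (fun j => min_le_right _ _)
      exact tendsto_one_div_add_atTop_nhds_zero_nat
    have hRto : Tendsto R atTop (nhds 0) := by
      apply squeeze_zero hRnn hkey
      have := htf.add hebto
      simpa using this
    have hνAc : Tendsto (fun j => fmeasE (ν j) Aᶜ) atTop (nhds 0) := by
      have heq : ∀ j, fmeasE (ν j) Aᶜ = ENNReal.ofReal (R j) := by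
        intro j
        rw [hfmeasE j Aᶜ, hR]
        congr 1
        refine Finset.sum_congr rfl fun k _ => ?_
        by_cases hk : k ∈ A <;> simp [hk]
      rw [funext heq]
      have := ENNReal.tendsto_ofReal hRto
      simpa using this
    -- conclude exhaustiveness
    rw [Submeasure.ExhMem]
    apply ENNReal.tendsto_atTop_zero.mpr
    intro ε hε
    obtain ⟨J, hJ⟩ := ENNReal.tendsto_atTop_zero.mp hνAc ε hε
    set M : ℕ := (Finset.range J).sup (fun j => (ν j).support.sup id) with hM
    refine ⟨M, fun m hm => ?_⟩
    show (⨆ j, fmeasE (ν j) (Aᶜ \ Set.Iic m)) ≤ ε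
    refine iSup_le fun j => ?_
    by_cases hj : j < J
    · have hzero : fmeasE (ν j) (Aᶜ \ Set.Iic m) = 0 := by
        rw [fmeasE]
        refine Finset.sum_eq_zero fun x hx => ?_
        have hx1 : x ≤ M := by
          calc x ≤ (ν j).support.sup id := Finset.le_sup (f := id) hx
            _ ≤ M := by
                rw [hM]
                exact Finset.le_sup (f := fun j => (ν j).support.sup id)
                  (Finset.mem_range.mpr hj)
        have hx2 : x ∉ (Aᶜ \ Set.Iic m : Set ℕ) := fun hmem => hmem.2 (le_trans hx1 hm)
        exact Set.indicator_of_notMem hx2 _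
      rw [hzero]
      exact zero_le
    · exact le_trans (fmeasE_mono (ν j) Set.diff_subset) (hJ j (not_lt.mp hj))

end Imp12c
/-- `N_F` has the BJNP iff `F` is contained in the filter dual to a (proper) density
ideal, iff `F` is contained in the filter dual to the exhaustive ideal of a (proper)
non-pathological lsc submeasure. -/
theorem stmt5 (F : Filter ℕ) (hF : IsFreeFilter F) :
    [BJNP (NFtop F),
     (∃ φ : Submeasure, φ.IsDensity ∧ ¬ φ.ExhMem Set.univ ∧ ∀ A ∈ F, φ.ExhMem Aᶜ),
     (∃ φ : Submeasure, φ.NonPathological ∧ φ.LSC ∧ ¬ φ.ExhMem Set.univ ∧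
        ∀ A ∈ F, φ.ExhMem Aᶜ)].TFAE := by
  tfae_have 1 → 2 := imp12 F hF
  tfae_have 2 → 3 := imp23 F
  tfae_have 3 → 1 := imp31 F
  tfae_finish
end
end
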